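/- If x = ∑_{n=1}^∞ (−1)^n ε_n/(d_1⋯d_n) satisfies φ̂^m(x) = x for the m-fold shift operator, then x = (1 + 1/((−1)^m d_1⋯d_m − 1)) · ∑_{i=1}^m (−1)^i ε_i/(d_1⋯d_i). -/

import Mathlib

open Finset

/-- Product d_1 d_2 ... d_n. -/
noncomputable def P (d : ℕ → ℕ) (n : ℕ) : ℝ := ∏ i ∈ Finset.Icc 1 n, (d i : ℝ)

/-- The alternating Cantor series sum ∑_{n≥1} (-1)^n ε_n/(d_1...d_n). -/
noncomputable def negaSum (d ε : ℕ → ℕ) : ℝ :=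
  ∑' n : ℕ, (-1 : ℝ) ^ (n + 1) * (ε (n + 1) : ℝ) / P d (n + 1)

/-- a₀ = ∑_{n≥1} (-1)^{n+1}/(d_1...d_n). -/
noncomputable def a0 (d : ℕ → ℕ) : ℝ := ∑' n : ℕ, (-1 : ℝ) ^ n / P d (n + 1)

/-- k-fold shift of the representation: ∑_{j≥1} (-1)^j ε_{k+j}/(d_{k+1}...d_{k+j}). -/
noncomputable def shift (d ε : ℕ → ℕ) (k : ℕ) : ℝ :=
  ∑' j : ℕ, (-1 : ℝ) ^ (j + 1) * (ε (k + j + 1) : ℝ) / ∏ i ∈ Finset.Icc (k + 1) (k + j + 1), (d i : ℝ)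

/-- Partial sum g_k = ∑_{i=1}^k (-1)^i ε_i/(d_1...d_i). -/
noncomputable def g (d ε : ℕ → ℕ) (k : ℕ) : ℝ :=
  ∑ i ∈ Finset.Icc 1 k, (-1 : ℝ) ^ i * (ε i : ℝ) / P d i

/-! Splitting off the first `m` digits gives `x = g_m + (-1)^m / (d_1⋯d_m) · φ̂^m(x)`. At a fixed point
of `φ̂^m` this is a linear equation for `x`, uniquely solvable because `d_1⋯d_m ≥ 2^m ≥ 2`. -/

lemma P_succ (d : ℕ → ℕ) (n : ℕ) : P d (n + 1) = P d n * d (n + 1) :=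
  Finset.prod_Icc_succ_top (by omega) _

lemma P_mul_prod_Icc (d : ℕ → ℕ) {m n : ℕ} (hmn : m ≤ n) :
    P d m * ∏ i ∈ Icc (m + 1) n, (d i : ℝ) = P d n := by
  simp only [P, Finset.Icc_add_one_left_eq_Ioc]
  exact Finset.prod_Ioc_consecutive _ (Nat.zero_le m) hmn

lemma two_pow_le_P {d : ℕ → ℕ} (hd : ∀ n, 1 ≤ n → 2 ≤ d n) (n : ℕ) : (2 : ℝ) ^ n ≤ P d n := by
  induction n with
  | zero => simp [P]
  | succ n ih =>
    rw [pow_succ, P_succ]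
    gcongr
    · exact (pow_nonneg zero_le_two n).trans ih
    · exact_mod_cast hd (n + 1) n.succ_pos

lemma summable_negaSum {d ε : ℕ → ℕ} (hd : ∀ n, 1 ≤ n → 2 ≤ d n) (hε : ∀ n, 1 ≤ n → ε n ≤ d n) :
    Summable fun n : ℕ => (-1 : ℝ) ^ (n + 1) * (ε (n + 1) : ℝ) / P d (n + 1) := by
  refine Summable.of_norm_bounded summable_geometric_two fun n => ?_
  have hP : (0 : ℝ) < P d n := (pow_pos two_pos n).trans_le (two_pow_le_P hd n)
  have hdn : (0 : ℝ) < d (n + 1) := by exact_mod_cast (hd (n + 1) n.succ_pos).trans_lt' two_pos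
  have hεd : (ε (n + 1) : ℝ) ≤ d (n + 1) := by exact_mod_cast hε (n + 1) n.succ_pos
  calc ‖(-1 : ℝ) ^ (n + 1) * (ε (n + 1) : ℝ) / P d (n + 1)‖
      = ε (n + 1) / d (n + 1) * (1 / P d n) := by
        rw [P_succ, Real.norm_eq_abs, abs_div, abs_mul, abs_pow, abs_neg, abs_one, one_pow,
          one_mul, Nat.abs_cast, abs_of_pos (mul_pos hP hdn)]
        field_simp
    _ ≤ 1 * (1 / 2 ^ n) := by
        gcongr
        · exact div_le_one_of_le₀ hεd hdn.le
        · exact two_pow_le_P hd n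
    _ = (1 / 2) ^ n := by rw [one_mul, one_div_pow]

lemma negaSum_eq_g_add_shift {d ε : ℕ → ℕ}
    (hs : Summable fun n : ℕ => (-1 : ℝ) ^ (n + 1) * (ε (n + 1) : ℝ) / P d (n + 1)) (m : ℕ) :
    negaSum d ε = g d ε m + (-1 : ℝ) ^ m / P d m * shift d ε m := by
  rw [negaSum, ← hs.sum_add_tsum_nat_add m, shift, ← tsum_mul_left]
  congr 1
  · rw [g, ← Finset.Ico_add_one_right_eq_Icc, Finset.sum_Ico_eq_sum_range]
    exact Finset.sum_congr rfl fun i _ => by rw [add_comm 1 i]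
  · refine tsum_congr fun n => ?_
    rw [div_mul_div_comm, P_mul_prod_Icc d (by omega : m ≤ m + n + 1), ← mul_assoc, ← pow_add,
      show n + m + 1 = m + n + 1 by omega, show m + (n + 1) = m + n + 1 by omega]

lemma eq_one_add_one_div_sub_one_mul {x a t : ℝ} (ht₀ : t ≠ 0) (ht₁ : t ≠ 1) (h : x = a + x / t) :
    x = (1 + 1 / (t - 1)) * a := by
  have ht : t - 1 ≠ 0 := sub_ne_zero.mpr ht₁
  field_simp at h ⊢
  linear_combination h

theorem fixed_point_of_shift (d ε : ℕ → ℕ) (m : ℕ)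
    (hm : 1 ≤ m) (hd : ∀ n, 1 ≤ n → 2 ≤ d n) (hε : ∀ n, 1 ≤ n → ε n ≤ d n - 1)
    (hfix : shift d ε m = negaSum d ε) :
    negaSum d ε = (1 + 1 / ((-1 : ℝ) ^ m * P d m - 1)) * g d ε m := by
  have hs := summable_negaSum hd fun n hn => (hε n hn).trans (Nat.sub_le _ _)
  have hsplit := negaSum_eq_g_add_shift hs m
  rw [hfix] at hsplit
  have hP : 2 ≤ |(-1 : ℝ) ^ m * P d m| := by
    rw [abs_mul, abs_pow, abs_neg, abs_one, one_pow, one_mul]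
    calc (2 : ℝ) = 2 ^ 1 := (pow_one 2).symm
      _ ≤ 2 ^ m := pow_le_pow_right₀ one_le_two hm
      _ ≤ P d m := two_pow_le_P hd m
      _ ≤ |P d m| := le_abs_self _
  refine eq_one_add_one_div_sub_one_mul ?_ ?_ ?_
  · intro h; rw [h, abs_zero] at hP; norm_num at hP
  · intro h; rw [h, abs_one] at hP; norm_num at hP
  · rcases neg_one_pow_eq_or ℝ m with h | h <;> rw [h] at hsplit ⊢ <;> linear_combination hsplit
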